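/- Let M̃ : [0,T] → ℝ be differentiable and satisfy M̃'(s) = -(q₁(s) - q₂(s)·M̃(s))·M̃(s) with terminal condition M̃(T) = g > 0, where q₁, q₂ : [0,T] → ℝ are continuous with q₁(s) > 0 and q₂(s) > 0 for all s. Then for all s ∈ [0,T], L₁ ≤ M̃(s) ≤ L₂, where L₁ = min(inf_{t∈[0,T]} q₁(t)/q₂(t), g) and L₂ = max(sup_{t∈[0,T]} q₁(t)/q₂(t), g). -/

import Mathlib

/-!
Where `M` exceeds `L₂`, which dominates `q₁ / q₂` and `g > 0`, the right-hand side of the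
equation is positive, so `M` increases there; running time backwards from `M T = g ≤ L₂`, the
solution can therefore never cross the level `L₂`. Symmetrically it cannot drop below `L₁`,
provided `M > 0`, and positivity holds because `M' = -(q₁ - q₂ M) M` is linear in `M` with a
bounded coefficient: by Grönwall, a zero of `M` would propagate forward to `M T = g > 0`.
-/

open Set

section Barrier

variable {f f' : ℝ → ℝ} {a b L : ℝ}

theorem le_of_hasDerivAt_pos_above (hab : a ≤ b) (hf : ∀ x ∈ Icc a b, HasDerivAt f (f' x) x)
    (hb : f b ≤ L) (hpos : ∀ x ∈ Icc a b, L < f x → 0 < f' x) : f a ≤ L := by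
  by_contra! ha
  have hfc : ContinuousOn f (Icc a b) := fun x hx => (hf x hx).continuousAt.continuousWithinAt
  set S := Icc a b ∩ f ⁻¹' Iic L
  have hSbdd : BddBelow S := ⟨a, fun x hx => hx.1.1⟩
  have htS : sInf S ∈ S :=
    (hfc.preimage_isClosed_of_isClosed isClosed_Icc isClosed_Iic).csInf_mem
      ⟨b, right_mem_Icc.2 hab, hb⟩ hSbdd
  set t := sInf S
  obtain ⟨⟨hat, htb⟩, hft : f t ≤ L⟩ := htS
  have hat' : a < t := hat.lt_of_ne fun h => by rw [← h] at hft; linarith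
  have habove : ∀ x ∈ Ico a t, L < f x := fun x hx => by
    by_contra! hle
    exact hx.2.not_ge (csInf_le hSbdd ⟨⟨hx.1, hx.2.le.trans htb⟩, hle⟩)
  have hmono : StrictMonoOn f (Icc a t) := by
    refine strictMonoOn_of_deriv_pos (convex_Icc a t) (hfc.mono (Icc_subset_Icc_right htb)) ?_
    intro x hx
    rw [interior_Icc] at hx
    have hx' : x ∈ Icc a b := ⟨hx.1.le, hx.2.le.trans htb⟩
    rw [(hf x hx').deriv]
    exact hpos x hx' (habove x ⟨hx.1.le, hx.2⟩)
  linarith [hmono (left_mem_Icc.2 hat) (right_mem_Icc.2 hat) hat']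

theorem ge_of_hasDerivAt_neg_below (hab : a ≤ b) (hf : ∀ x ∈ Icc a b, HasDerivAt f (f' x) x)
    (hb : L ≤ f b) (hneg : ∀ x ∈ Icc a b, f x < L → f' x < 0) : L ≤ f a := by
  have := le_of_hasDerivAt_pos_above (f := -f) (f' := -f') (L := -L) hab
    (fun x hx => (hf x hx).neg) (neg_le_neg hb)
    fun x hx h => neg_pos.2 (hneg x hx (neg_lt_neg_iff.1 h))
  simpa using this

theorem pos_of_abs_hasDerivAt_le_mul_abs {K : ℝ} (hab : a ≤ b)
    (hf : ∀ x ∈ Icc a b, HasDerivAt f (f' x) x) (hK : ∀ x ∈ Icc a b, |f' x| ≤ K * |f x|)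
    (hb : 0 < f b) : 0 < f a := by
  have hfc : ContinuousOn f (Icc a b) := fun x hx => (hf x hx).continuousAt.continuousWithinAt
  have hne : ∀ x ∈ Icc a b, f x ≠ 0 := by
    intro x hx hx0
    have hsub : Icc x b ⊆ Icc a b := Icc_subset_Icc_left hx.1
    have := eq_zero_of_abs_deriv_le_mul_abs_self_of_eq_zero_right (hfc.mono hsub)
      (fun y hy => (hf y (hsub (Ico_subset_Icc_self hy))).hasDerivWithinAt) hx0
      (fun y hy => hK y (hsub (Ico_subset_Icc_self hy))) b (right_mem_Icc.2 hx.2)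
    exact hb.ne' this
  by_contra! ha
  obtain ⟨c, hc, hc0⟩ := intermediate_value_Icc hab hfc ⟨ha, hb.le⟩
  exact hne c hc hc0

end Barrier

section Logistic

variable {p q m : ℝ}

theorem logistic_rhs_pos (hq : 0 < q) (hm : 0 < m) (h : p / q < m) :
    0 < -((p - q * m) * m) := by
  have := (div_lt_iff₀ hq).1 h
  nlinarith

theorem logistic_rhs_neg (hq : 0 < q) (hm : 0 < m) (h : m < p / q) :
    -((p - q * m) * m) < 0 := by
  have := (lt_div_iff₀ hq).1 h
  nlinarith

end Logistic

theorem stmt_4_general (T g : ℝ) (q₁ q₂ M : ℝ → ℝ)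
    (hq₁ : ContinuousOn q₁ (Set.Icc 0 T)) (hq₂ : ContinuousOn q₂ (Set.Icc 0 T))
    (hq₂pos : ∀ s ∈ Set.Icc 0 T, 0 < q₂ s)
    (hODE : ∀ s ∈ Set.Icc 0 T, HasDerivAt M (-((q₁ s - q₂ s * M s) * M s)) s)
    (hterm : M T = g) (hg : 0 < g) :
    ∀ s ∈ Set.Icc 0 T,
      min (sInf ((fun t => q₁ t / q₂ t) '' Set.Icc 0 T)) g ≤ M s ∧
      M s ≤ max (sSup ((fun t => q₁ t / q₂ t) '' Set.Icc 0 T)) g := by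
  intro s hs
  set φ : ℝ → ℝ := fun t => q₁ t / q₂ t
  have hφ : ContinuousOn φ (Icc 0 T) := hq₁.div hq₂ fun t ht => (hq₂pos t ht).ne'
  have hsub : Icc s T ⊆ Icc 0 T := Icc_subset_Icc_left hs.1
  have hODE' (x) (hx : x ∈ Icc s T) := hODE x (hsub hx)
  have hMc : ContinuousOn M (Icc 0 T) := fun x hx => (hODE x hx).continuousAt.continuousWithinAt
  obtain ⟨K, hK⟩ := isCompact_Icc.exists_bound_of_continuousOn (hq₁.sub (hq₂.mul hMc))
  have hMpos (x) (hx : x ∈ Icc s T) : 0 < M x :=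
    pos_of_abs_hasDerivAt_le_mul_abs (K := K) hx.2
      (fun y hy => hODE y (hsub ⟨hx.1.trans hy.1, hy.2⟩))
      (fun y hy => by
        rw [abs_neg, abs_mul]
        exact mul_le_mul_of_nonneg_right (hK y (hsub ⟨hx.1.trans hy.1, hy.2⟩)) (abs_nonneg _))
      (hterm ▸ hg)
  constructor
  · refine ge_of_hasDerivAt_neg_below hs.2 hODE' (hterm ▸ min_le_right _ _) fun x hx hlt => ?_
    refine logistic_rhs_neg (hq₂pos x (hsub hx)) (hMpos x hx) (hlt.trans_le ?_)
    exact (min_le_left _ _).trans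
      (csInf_le (isCompact_Icc.bddBelow_image hφ) (mem_image_of_mem φ (hsub hx)))
  · refine le_of_hasDerivAt_pos_above hs.2 hODE' (hterm ▸ le_max_right _ _) fun x hx hlt => ?_
    refine logistic_rhs_pos (hq₂pos x (hsub hx)) (hlt.trans' ?_) (lt_of_le_of_lt ?_ hlt)
    · exact hg.trans_le (le_max_right _ _)
    · exact (le_csSup (isCompact_Icc.bddAbove_image hφ) (mem_image_of_mem φ (hsub hx))).trans
        (le_max_left _ _)

theorem stmt_4 (T g : ℝ) (hT : 0 < T) (q₁ q₂ M : ℝ → ℝ)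
    (hq₁ : ContinuousOn q₁ (Set.Icc 0 T)) (hq₂ : ContinuousOn q₂ (Set.Icc 0 T))
    (hq₁pos : ∀ s ∈ Set.Icc 0 T, 0 < q₁ s)
    (hq₂pos : ∀ s ∈ Set.Icc 0 T, 0 < q₂ s)
    (hODE : ∀ s ∈ Set.Icc 0 T, HasDerivAt M (-((q₁ s - q₂ s * M s) * M s)) s)
    (hterm : M T = g) (hg : 0 < g) :
    ∀ s ∈ Set.Icc 0 T,
      min (sInf ((fun t => q₁ t / q₂ t) '' Set.Icc 0 T)) g ≤ M s ∧
      M s ≤ max (sSup ((fun t => q₁ t / q₂ t) '' Set.Icc 0 T)) g :=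
  stmt_4_general T g q₁ q₂ M hq₁ hq₂ hq₂pos hODE hterm hg
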